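/- Let 0 < γ < 1, a > 0, b > 0 and t₀ > 0. Let y and z be nonnegative, locally absolutely continuous functions of t > 0 satisfying y(t₀) = y₀, z(t₀) = z₀ and, for almost every t, |y'(t)| ≤ b t^{−1−γ} y(t) + a t^{−2} z(t) and |z'(t)| ≤ b t^{−1−γ} z(t) + a t^{−γ} y(t). Define ȳ and z̄ by (y(t), z(t)) = (ȳ(t), z̄(t)) · exp( b γ^{-1} |t^{−γ} − t₀^{−γ}| ). Then, whenever γ · min(t₀^γ, t^γ) ≥ 2a²: for t ≥ t₀, ȳ(t) ≤ 2(y₀ + a z₀ t₀^{−1}) and z̄(t) ≤ z₀ + 2(1−γ)^{-1} a (y₀ + a z₀ t₀^{−1}) t^{1−γ}; for t ≤ t₀, ȳ(t) ≤ y₀ + 2a (z₀ + (1−γ)^{-1} a y₀ t₀^{1−γ}) t^{−1} and z̄(t) ≤ 2(z₀ + (1−γ)^{-1} a y₀ t₀^{1−γ}). -/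

import Mathlib

open MeasureTheory Filter Set
open scoped ENNReal FourierTransform RealInnerProductSpace Topology ComplexConjugate

noncomputable section

/-- Euclidean space ℝⁿ. -/
abbrev Ed (n : ℕ) := EuclideanSpace ℝ (Fin n)

/-- `‖∂^j f‖_r` : the `L^r` norm of the `j`-th iterated derivative of `f`
(equivalent to the sum over multi-indices of length `j`). -/
def dNorm {n : ℕ} {F : Type*} [NormedAddCommGroup F] [NormedSpace ℝ F]
    (j : ℕ) (r : ℝ≥0∞) (f : Ed n → F) : ℝ≥0∞ :=
  eLpNorm (fun x => ‖iteratedFDeriv ℝ j f x‖) r volume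

/-- Sobolev `H^k` norm `|f|_k = ∑_{j ≤ k} ‖∂^j f‖₂`. -/
def HNorm {n : ℕ} {F : Type*} [NormedAddCommGroup F] [NormedSpace ℝ F]
    (k : ℕ) (f : Ed n → F) : ℝ≥0∞ :=
  ∑ j ∈ Finset.range (k + 1), dNorm j 2 f

/-- Homogeneous Sobolev norm `‖∂^j f‖₂`. -/
def hdot {n : ℕ} {F : Type*} [NormedAddCommGroup F] [NormedSpace ℝ F]
    (j : ℕ) (f : Ed n → F) : ℝ≥0∞ := dNorm j 2 f

/-- `r₀ = 2n` for odd `n`, `∞` for even `n`. -/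
def r0 (n : ℕ) : ℝ≥0∞ := if Odd n then ((2 * n : ℕ) : ℝ≥0∞) else ⊤

/-- `X^ℓ = L^{r₀} ∩ Ḣ^{ℓ₀} ∩ Ḣ^{ℓ+1}` norm, with `ℓ₀ = [n/2]`. -/
def XNorm {n : ℕ} {F : Type*} [NormedAddCommGroup F] [NormedSpace ℝ F]
    (ℓ : ℕ) (f : Ed n → F) : ℝ≥0∞ :=
  dNorm 0 (r0 n) f + dNorm (n / 2) 2 f + dNorm (ℓ + 1) 2 f

/-- `Y^ℓ` norm for phases: `‖φ‖_∞ + |∇φ|_ℓ`. -/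
def YNorm {n : ℕ} (ℓ : ℕ) (φ : Ed n → ℝ) : ℝ≥0∞ :=
  dNorm 0 ⊤ φ + XNorm ℓ (fun x => gradient φ x)

/-- `L^∞ ∩ Ḣ^ℓ` norm. -/
def LHNorm {n : ℕ} {F : Type*} [NormedAddCommGroup F] [NormedSpace ℝ F]
    (ℓ : ℕ) (f : Ed n → F) : ℝ≥0∞ :=
  dNorm 0 ⊤ f + hdot ℓ f

/-- Admissible pair `(k, ℓ)`. -/
def Admissible (n : ℕ) (μ : ℝ) (k ℓ : ℕ) : Prop :=
  k ≤ ℓ ∧ (n : ℝ) / 2 < (ℓ : ℝ) ∧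
    ((ℓ : ℝ) + 2 + μ ≤ min ((n : ℝ) / 2 + 2 * k) ((n : ℝ) + k)) ∧
    ((ℓ : ℝ) + 2 + μ = (n : ℝ) + k → (n : ℝ) / 2 < (k : ℝ)) ∧
    (Even n → (n : ℝ) / 2 + 3 + μ < min ((n : ℝ) / 2 + 2 * k) ((n : ℝ) + k))

/-- The free Schrödinger group `U(t) = exp(i(t/2)Δ)`, as a Fourier multiplier. -/
def freeProp {n : ℕ} (t : ℝ) (f : Ed n → ℂ) : Ed n → ℂ :=
  FourierTransformInv.fourierInv
    (fun ξ => Complex.exp (((-(2 * Real.pi ^ 2 * t * ‖ξ‖ ^ 2) : ℝ) : ℂ) * Complex.I) * (𝓕 f) ξ)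

/-- Convolution with `|x|^{-μ}`, realizing `ω^{μ-n}` (up to a positive constant). -/
def omegaConv {n : ℕ} (μ : ℝ) (f : Ed n → ℂ) : Ed n → ℂ :=
  fun x => ∫ y : Ed n, ((‖x - y‖ ^ (-μ) : ℝ) : ℂ) * f y

/-- `g₀(w₁, w₂) = λ Re ω^{μ-n}(w₁ \bar w₂)`. -/
def g0 {n : ℕ} (lam μ : ℝ) (w₁ w₂ : Ed n → ℂ) : Ed n → ℝ :=
  fun x => lam * (omegaConv μ (fun y => w₁ y * conj (w₂ y)) x).re

/-- `g(w₁, w₂)(t) = g₀(U(1/t)^* w₁, U(1/t)^* w₂)`. -/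
def gt {n : ℕ} (lam μ t : ℝ) (w₁ w₂ : Ed n → ℂ) : Ed n → ℝ :=
  g0 lam μ (freeProp (-(1 / t)) w₁) (freeProp (-(1 / t)) w₂)

/-- Divergence `∇·s` of a vector field. -/
def divg {n : ℕ} (s : Ed n → Ed n) : Ed n → ℝ :=
  fun x => ∑ i : Fin n, fderiv ℝ s x (EuclideanSpace.single i 1) i

/-- Right-hand side of the `w` equation:
`(2t²)^{-1} U(1/t)(2 s·∇ + (∇·s)) U(1/t)^* w`. -/
def auxRHSw {n : ℕ} (t : ℝ) (w : Ed n → ℂ) (s : Ed n → Ed n) : Ed n → ℂ :=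
  fun x => (1 / (2 * t ^ 2) : ℝ) •
    freeProp (1 / t)
      (fun y => 2 * fderiv ℝ (freeProp (-(1 / t)) w) y (s y)
        + ((divg s y : ℝ) : ℂ) * freeProp (-(1 / t)) w y) x

/-- Right-hand side of the `s` equation: `t^{-2}(s·∇)s + t^{-γ} ∇ g(w,w)`. -/
def auxRHSs {n : ℕ} (lam μ γ t : ℝ) (w : Ed n → ℂ) (s : Ed n → Ed n) : Ed n → Ed n :=
  fun x => (1 / t ^ 2 : ℝ) • fderiv ℝ s x (s x)
    + (t ^ (-γ) : ℝ) • gradient (gt lam μ t w w) x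

/-- `(w, s)` solves the auxiliary system on `I`. -/
def IsAuxSol {n : ℕ} (lam μ γ : ℝ) (I : Set ℝ)
    (w : ℝ → Ed n → ℂ) (s : ℝ → Ed n → Ed n) : Prop :=
  ∀ t ∈ I, ∀ x,
    HasDerivAt (fun τ => w τ x) (auxRHSw t (w t) (s t) x) t ∧
    HasDerivAt (fun τ => s τ x) (auxRHSs lam μ γ t (w t) (s t) x) t

/-- `s̃(t) = t^{γ-1} s(t)`. -/
def tscale {n : ℕ} {F : Type*} [NormedAddCommGroup F] [NormedSpace ℝ F]
    (γ : ℝ) (s : ℝ → Ed n → F) : ℝ → Ed n → F :=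
  fun t x => (t ^ (γ - 1) : ℝ) • s t x

/-- `u ∈ L^∞(I, ·)` with respect to the norm `N`. -/
def BddCl {n : ℕ} {F : Type*} [NormedAddCommGroup F] [NormedSpace ℝ F]
    (N : (Ed n → F) → ℝ≥0∞) (I : Set ℝ) (u : ℝ → Ed n → F) : Prop :=
  ∃ M : ℝ≥0∞, M ≠ ⊤ ∧ ∀ t ∈ I, N (u t) ≤ M

/-- `u ∈ C(I, ·)` with respect to the norm `N` (finite and strongly continuous). -/
def ContCl {n : ℕ} {F : Type*} [NormedAddCommGroup F] [NormedSpace ℝ F]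
    (N : (Ed n → F) → ℝ≥0∞) (I : Set ℝ) (u : ℝ → Ed n → F) : Prop :=
  (∀ t ∈ I, N (u t) ≠ ⊤) ∧
  ∀ t₀ ∈ I, Tendsto (fun t => N (fun x => u t x - u t₀ x)) (𝓝[I] t₀) (𝓝 0)

/-- `u ∈ (C ∩ L^∞)(I, ·)` with respect to the norm `N`. -/
def InCL {n : ℕ} {F : Type*} [NormedAddCommGroup F] [NormedSpace ℝ F]
    (N : (Ed n → F) → ℝ≥0∞) (I : Set ℝ) (u : ℝ → Ed n → F) : Prop :=
  BddCl N I u ∧ ContCl N I u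

/-- `(w, s̃) ∈ (C ∩ L^∞)(I, H^k ⊕ X^ℓ)`. -/
def AuxClass {n : ℕ} (γ : ℝ) (k ℓ : ℕ) (I : Set ℝ)
    (w : ℝ → Ed n → ℂ) (s : ℝ → Ed n → Ed n) : Prop :=
  InCL (HNorm k) I w ∧ InCL (XNorm ℓ) I (tscale γ s)

/-- Supremum over `I` of the `N`-norm. -/
def supN {n : ℕ} {F : Type*} [NormedAddCommGroup F] [NormedSpace ℝ F]
    (N : (Ed n → F) → ℝ≥0∞) (I : Set ℝ) (u : ℝ → Ed n → F) : ℝ≥0∞ :=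
  ⨆ t ∈ I, N (u t)

/-- Solution of `∂_t s₀ = t^{-γ} ∇ g(wp, wp)` with value `s01` at `t = 1`. -/
def s0of {n : ℕ} (lam μ γ : ℝ) (wp : Ed n → ℂ) (s01 : Ed n → Ed n) : ℝ → Ed n → Ed n :=
  fun t x => s01 x + ∫ τ in (1:ℝ)..t, (τ ^ (-γ) : ℝ) • gradient (gt lam μ τ wp wp) x

/-- Solution of `∂_t s₀₂ = t^{-γ} ∇ g₀(wp)` with value `s021` at `t = 1`:
`s₀₂(t) = s₀₂(1) + (1-γ)^{-1}(t^{1-γ} - 1) ∇g₀(wp)`. -/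
def s02of {n : ℕ} (lam μ γ : ℝ) (wp : Ed n → ℂ) (s021 : Ed n → Ed n) : ℝ → Ed n → Ed n :=
  fun t x => s021 x + ((1 - γ)⁻¹ * (t ^ (1 - γ) - 1)) • gradient (g0 lam μ wp wp) x

/-- The integrand `t^{-2}(s·∇)s + t^{-γ}(∇g(w,w) - ∇g(wp,wp))` appearing in the
definition of the asymptotic state. -/
def corrInt {n : ℕ} (lam μ γ : ℝ) (w : ℝ → Ed n → ℂ) (s : ℝ → Ed n → Ed n)
    (wp : Ed n → ℂ) (τ : ℝ) : Ed n → Ed n :=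
  fun x => (τ ^ (-(2:ℝ)) : ℝ) • fderiv ℝ (s τ) x (s τ x)
    + (τ ^ (-γ) : ℝ) • (gradient (gt lam μ τ (w τ) (w τ)) x - gradient (gt lam μ τ wp wp) x)

/-- `s_{0,t₀}(t) = s(t₀) + ∫_{t₀}^t τ^{-γ} ∇g(w(t₀), w(t₀)) dτ`. -/
def s0t0of {n : ℕ} (lam μ γ : ℝ) (w : ℝ → Ed n → ℂ) (s : ℝ → Ed n → Ed n) (t₀ : ℝ) :
    ℝ → Ed n → Ed n :=
  fun t x => s t₀ x + ∫ τ in t₀..t, (τ ^ (-γ) : ℝ) • gradient (gt lam μ τ (w t₀) (w t₀)) x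

/-- Right-hand side of the phase equation:
`(2t²)^{-1}|∇φ|² + t^{-γ} g₀(U(1/t)^* w)`. -/
def phaseRHSphi {n : ℕ} (lam μ γ t : ℝ) (w : Ed n → ℂ) (φ : Ed n → ℝ) : Ed n → ℝ :=
  fun x => (1 / (2 * t ^ 2)) * ‖gradient φ x‖ ^ 2 + t ^ (-γ) * gt lam μ t w w x

/-- `(w, φ)` solves the phase–amplitude system on `I`. -/
def IsPhaseSol {n : ℕ} (lam μ γ : ℝ) (I : Set ℝ)
    (w : ℝ → Ed n → ℂ) (φ : ℝ → Ed n → ℝ) : Prop :=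
  ∀ t ∈ I, ∀ x,
    HasDerivAt (fun τ => w τ x) (auxRHSw t (w t) (fun y => gradient (φ t) y) x) t ∧
    HasDerivAt (fun τ => φ τ x) (phaseRHSphi lam μ γ t (w t) (φ t) x) t

/-- Gauge equivalence : `e^{-iφ(t)} U(1/t)^* w(t) = e^{-iφ'(t)} U(1/t)^* w'(t)` on `I`. -/
def GaugeEquiv {n : ℕ} (I : Set ℝ) (w w' : ℝ → Ed n → ℂ) (φ φ' : ℝ → Ed n → ℝ) : Prop :=
  ∀ t ∈ I, ∀ x,
    Complex.exp (-(Complex.I) * ((φ t x : ℝ) : ℂ)) * freeProp (-(1 / t)) (w t) x =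
    Complex.exp (-(Complex.I) * ((φ' t x : ℝ) : ℂ)) * freeProp (-(1 / t)) (w' t) x

/-- `φ₀₂(t) = φ₀₂(1) + (1-γ)^{-1}(t^{1-γ} - 1) g₀(wp)`. -/
def phi02of {n : ℕ} (lam μ γ : ℝ) (wp : Ed n → ℂ) (φ021 : Ed n → ℝ) : ℝ → Ed n → ℝ :=
  fun t x => φ021 x + (1 - γ)⁻¹ * (t ^ (1 - γ) - 1) * g0 lam μ wp wp x

/-- `(w, φ)` (defined on `[T, ∞)`) is the image of `(wp, φ₀₂(1))` under the map `W`. -/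
def IsWPair {n : ℕ} (lam μ γ : ℝ) (k ℓ : ℕ) (wp : Ed n → ℂ) (φ021 : Ed n → ℝ)
    (T : ℝ) (w : ℝ → Ed n → ℂ) (φ : ℝ → Ed n → ℝ) : Prop :=
  1 ≤ T ∧
  IsPhaseSol lam μ γ (Ici T) w φ ∧
  InCL (HNorm k) (Ici T) w ∧
  InCL (XNorm ℓ) (Ici T) (tscale γ fun t y => gradient (φ t) y) ∧
  (∃ Cw : ℝ, ∀ t ∈ Ici T,
    HNorm k (fun x => w t x - wp x) ≤ ENNReal.ofReal (Cw * t ^ (-γ))) ∧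
  (∃ Cs : ℝ, ∀ t ∈ Ici T,
    XNorm ℓ (fun x => gradient (φ t) x - gradient (phi02of lam μ γ wp φ021 t) x)
      ≤ ENNReal.ofReal (Cs * (t ^ (1 - 2 * γ) + t ^ ((1:ℝ) / 2 - γ)))) ∧
  (∀ t ∈ Ici T, ∀ x, φ t x = phi02of lam μ γ wp φ021 t x -
    ∫ τ in Ioi t, ((1 / (2 * τ ^ 2)) * ‖gradient (φ τ) x‖ ^ 2
      + τ ^ (-γ) * (gt lam μ τ (w τ) (w τ) x - g0 lam μ wp wp x)))

/-- `M(t) D(t) f`. -/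
def MD {n : ℕ} (t : ℝ) (f : Ed n → ℂ) : Ed n → ℂ :=
  fun x => Complex.exp (Complex.I * ((‖x‖ ^ 2 / (2 * t) : ℝ) : ℂ)) *
    (Complex.I * (t : ℂ)) ^ (-(n : ℂ) / 2) * f ((1 / t) • x)

/-- `D(t)^* M(t)^* u`. -/
def MDstar {n : ℕ} (t : ℝ) (u : Ed n → ℂ) : Ed n → ℂ :=
  fun x => (Complex.I * (t : ℂ)) ^ ((n : ℂ) / 2) *
    Complex.exp (-(Complex.I) * ((t * ‖x‖ ^ 2 / 2 : ℝ) : ℂ)) * u (t • x)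

/-- The norm `‖⟨J(t)⟩^k u‖₂`, realized as `|D(t)* M(t)* u|_{H^k}`. -/
def JNorm {n : ℕ} (k : ℕ) (t : ℝ) (u : Ed n → ℂ) : ℝ≥0∞ := HNorm k (MDstar t u)

/-- `u ∈ 𝒳^k(I) = {u : ⟨J(t)⟩^k u ∈ C(I, L²)}`. -/
def XCal {n : ℕ} (k : ℕ) (I : Set ℝ) (u : ℝ → Ed n → ℂ) : Prop :=
  (∀ t ∈ I, JNorm k t (u t) ≠ ⊤) ∧
  ∀ t₀ ∈ I, Tendsto (fun t => HNorm k (fun x => MDstar t (u t) x - MDstar t₀ (u t₀) x))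
    (𝓝[I] t₀) (𝓝 0)

/-- Laplacian of a complex-valued function. -/
def lap {n : ℕ} (f : Ed n → ℂ) : Ed n → ℂ :=
  fun x => ∑ i : Fin n,
    fderiv ℝ (fun y => fderiv ℝ f y (EuclideanSpace.single i 1)) x (EuclideanSpace.single i 1)

/-- `u` solves the Hartree-type equation `i ∂_t u + ½Δu = λ t^{μ-γ} ω^{μ-n}(|u|²) u` on `I`. -/
def IsHartreeSol {n : ℕ} (lam μ γ : ℝ) (I : Set ℝ) (u : ℝ → Ed n → ℂ) : Prop :=
  ∀ t ∈ I, ∀ x, HasDerivAt (fun τ => u τ x)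
    (Complex.I * ((1 / 2 : ℂ) * lap (u t) x)
      - Complex.I * (((t ^ (μ - γ) * g0 lam μ (u t) (u t) x : ℝ)) : ℂ) * u t x) t

/-- The map `Φ : (w, φ) ↦ u = M D e^{-iφ} U(1/t)^* w` (at time `t`). -/
def PhiMap {n : ℕ} (t : ℝ) (w : Ed n → ℂ) (φ : Ed n → ℝ) : Ed n → ℂ :=
  MD t (fun y => Complex.exp (-(Complex.I) * ((φ y : ℝ) : ℂ)) * freeProp (-(1 / t)) w y)

/-- `u` (on `[T,∞)`) is the image of `(wp, φ₀₂(1))` under `Φ ∘ W`. -/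
def IsPhiWImage {n : ℕ} (lam μ γ : ℝ) (k ℓ : ℕ) (wp : Ed n → ℂ) (φ021 : Ed n → ℝ)
    (T : ℝ) (u : ℝ → Ed n → ℂ) : Prop :=
  ∃ w φ, IsWPair lam μ γ k ℓ wp φ021 T w φ ∧
    ∀ t ∈ Ici T, ∀ x, u t x = PhiMap t (w t) (φ t) x

/-- `u` (on `[T,∞)`) is the image of the asymptotic state `up` under the wave operator
`Ω : up ↦ (Φ ∘ W)(F up, 0)`. -/
def IsOmegaImage {n : ℕ} (lam μ γ : ℝ) (k ℓ : ℕ) (up : Ed n → ℂ)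
    (T : ℝ) (u : ℝ → Ed n → ℂ) : Prop :=
  IsPhiWImage lam μ γ k ℓ (𝓕 up) (fun _ => (0:ℝ)) T u

/-- First-order partial derivative in the `i`-th coordinate direction. -/
def pDeriv {n : ℕ} {F : Type*} [NormedAddCommGroup F] [NormedSpace ℝ F]
    (i : Fin n) (f : Ed n → F) : Ed n → F :=
  fun x => fderiv ℝ f x (EuclideanSpace.single i 1)

/-- `∂^α` for a multi-index `α`. -/
def mDeriv {n : ℕ} {F : Type*} [NormedAddCommGroup F] [NormedSpace ℝ F]
    (α : Fin n → ℕ) (f : Ed n → F) : Ed n → F :=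
  (List.finRange n).foldr (fun i g => (pDeriv i)^[α i] g) f


/-- The Dollard-type phase `φ₀(t) = φ₀₂(t) - ∫_t^∞ τ^{-γ}( g₀(F M(τ) up) - g₀(F up) ) dτ`
(with `φ₀₂(1) = 0`). -/
def phi0of {n : ℕ} (lam μ γ : ℝ) (up : Ed n → ℂ) : ℝ → Ed n → ℝ :=
  fun t x => phi02of lam μ γ (𝓕 up) (fun _ => (0:ℝ)) t x -
    ∫ τ in Ioi t, τ ^ (-γ) *
      (g0 lam μ (𝓕 fun y => Complex.exp (Complex.I * ((‖y‖ ^ 2 / (2 * τ) : ℝ) : ℂ)) * up y)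
          (𝓕 fun y => Complex.exp (Complex.I * ((‖y‖ ^ 2 / (2 * τ) : ℝ) : ℂ)) * up y) x
        - g0 lam μ (𝓕 up) (𝓕 up) x)

end

open intervalIntegral

private lemma my_cont_int {h : ℝ → ℝ} (hh : ContinuousOn h (Ioi 0)) {c d : ℝ}
    (hc : 0 < c) (hd : 0 < d) : IntervalIntegrable h volume c d :=
  (hh.mono (fun y hy => lt_of_lt_of_le (lt_min hc hd) hy.1)).intervalIntegrable

private lemma my_deriv_int {h : ℝ → ℝ} (hh : ContinuousOn h (Ioi 0)) {c x : ℝ}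
    (hc : 0 < c) (hx : 0 < x) :
    HasDerivAt (fun s => ∫ τ in c..s, h τ) (h x) x := by
  refine integral_hasDerivAt_right (my_cont_int hh hc hx)
    (hh.stronglyMeasurableAtFilter isOpen_Ioi x hx)
    (hh.continuousAt (isOpen_Ioi.mem_nhds hx))

private lemma my_deriv_int_left {h : ℝ → ℝ} (hh : ContinuousOn h (Ioi 0)) {c x : ℝ}
    (hc : 0 < c) (hx : 0 < x) :
    HasDerivAt (fun s => ∫ τ in s..c, h τ) (-h x) x := by
  refine integral_hasDerivAt_left (my_cont_int hh hx hc)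
    (hh.stronglyMeasurableAtFilter isOpen_Ioi x hx)
    (hh.continuousAt (isOpen_Ioi.mem_nhds hx))

private lemma my_gron_fwd (t₀ T : ℝ) (ht₀ : 0 < t₀) (u f β B : ℝ → ℝ)
    (hu : ContinuousOn u (Ioi 0)) (hf : ContinuousOn f (Ioi 0))
    (hβ : ContinuousOn β (Ioi 0))
    (hβ0 : ∀ t, 0 < t → 0 ≤ β t)
    (hB : ∀ t, 0 < t → HasDerivAt B (β t) t) (hB0 : B t₀ = 0)
    (hineq : ∀ t ∈ Icc t₀ T, u t ≤ u t₀ + ∫ τ in t₀..t, (β τ * u τ + f τ)) :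
    ∀ t ∈ Icc t₀ T, u t * Real.exp (-B t) ≤ u t₀ + ∫ τ in t₀..t, Real.exp (-B τ) * f τ := by
  have hsub : Icc t₀ T ⊆ Ioi 0 := fun x hx => lt_of_lt_of_le ht₀ hx.1
  have hBc : ContinuousOn B (Ioi 0) := fun x hx => (hB x hx).continuousAt.continuousWithinAt
  have hEc : ContinuousOn (fun τ => Real.exp (-B τ)) (Ioi 0) :=
    (Real.continuous_exp.comp_continuousOn hBc.neg)
  have hg : ContinuousOn (fun τ => β τ * u τ + f τ) (Ioi 0) := (hβ.mul hu).add hf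
  have hEf : ContinuousOn (fun τ => Real.exp (-B τ) * f τ) (Ioi 0) := hEc.mul hf
  set V : ℝ → ℝ := fun s => ∫ τ in t₀..s, (β τ * u τ + f τ) with hV
  set W : ℝ → ℝ := fun s => Real.exp (-B s) * (u t₀ + V s) - ∫ τ in t₀..s, Real.exp (-B τ) * f τ
    with hW
  have hWd : ∀ x, 0 < x → HasDerivAt W
      (Real.exp (-B x) * (-β x) * (u t₀ + V x) + Real.exp (-B x) * (β x * u x + f x)
        - Real.exp (-B x) * f x) x := by
    intro x hx
    exact (((((hB x hx).neg).exp).mul ((my_deriv_int hg ht₀ hx).const_add (u t₀))).sub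
      (my_deriv_int hEf ht₀ hx))
  have hanti : AntitoneOn W (Icc t₀ T) := by
    apply antitoneOn_of_deriv_nonpos (convex_Icc t₀ T)
    · exact fun x hx => (hWd x (hsub hx)).continuousAt.continuousWithinAt
    · intro x hx
      rw [interior_Icc] at hx
      exact (hWd x (hsub (Ioo_subset_Icc_self hx))).differentiableAt.differentiableWithinAt
    · intro x hx
      rw [interior_Icc] at hx
      have hx0 : 0 < x := hsub (Ioo_subset_Icc_self hx)
      rw [(hWd x hx0).deriv]
      have h1 : u x ≤ u t₀ + V x := hineq x (Ioo_subset_Icc_self hx)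
      have h2 : 0 ≤ β x := hβ0 x hx0
      have h3 : (0:ℝ) < Real.exp (-B x) := Real.exp_pos _
      nlinarith [mul_le_mul_of_nonneg_left h1 (mul_nonneg h3.le h2)]
  intro t htI
  have hWt : W t ≤ W t₀ := hanti (left_mem_Icc.2 (htI.1.trans htI.2)) htI htI.1
  have hVt0 : V t₀ = 0 := intervalIntegral.integral_same
  have h1 : u t ≤ u t₀ + V t := hineq t htI
  have h3 : (0:ℝ) ≤ Real.exp (-B t) := (Real.exp_pos _).le
  have := mul_le_mul_of_nonneg_right h1 h3
  simp only [hW, hVt0, hB0, neg_zero, Real.exp_zero, one_mul, add_zero,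
    intervalIntegral.integral_same, sub_zero] at hWt
  nlinarith

private lemma my_gron_bwd (t₀ S : ℝ) (hS : 0 < S) (u f β B : ℝ → ℝ)
    (hu : ContinuousOn u (Ioi 0)) (hf : ContinuousOn f (Ioi 0))
    (hβ : ContinuousOn β (Ioi 0))
    (hβ0 : ∀ t, 0 < t → 0 ≤ β t)
    (hB : ∀ t, 0 < t → HasDerivAt B (-β t) t) (hB0 : B t₀ = 0)
    (hineq : ∀ t ∈ Icc S t₀, u t ≤ u t₀ + ∫ τ in t..t₀, (β τ * u τ + f τ)) :
    ∀ t ∈ Icc S t₀, u t * Real.exp (-B t) ≤ u t₀ + ∫ τ in t..t₀, Real.exp (-B τ) * f τ := by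
  have hsub : Icc S t₀ ⊆ Ioi 0 := fun x hx => lt_of_lt_of_le hS hx.1
  rcases (Icc S t₀).eq_empty_or_nonempty with he | hne
  · intro t ht; rw [he] at ht; exact absurd ht (notMem_empty t)
  have ht₀ : 0 < t₀ := hsub ⟨(hne.some_mem).1.trans hne.some_mem.2, le_rfl⟩
  have hBc : ContinuousOn B (Ioi 0) := fun x hx => (hB x hx).continuousAt.continuousWithinAt
  have hg : ContinuousOn (fun τ => β τ * u τ + f τ) (Ioi 0) := (hβ.mul hu).add hf
  have hEf : ContinuousOn (fun τ => Real.exp (-B τ) * f τ) (Ioi 0) :=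
    (Real.continuous_exp.comp_continuousOn hBc.neg).mul hf
  set V : ℝ → ℝ := fun s => ∫ τ in s..t₀, (β τ * u τ + f τ) with hV
  set W : ℝ → ℝ := fun s => Real.exp (-B s) * (u t₀ + V s) - ∫ τ in s..t₀, Real.exp (-B τ) * f τ
    with hW
  have hWd : ∀ x, 0 < x → HasDerivAt W
      (Real.exp (-B x) * (-(-β x)) * (u t₀ + V x) + Real.exp (-B x) * (-(β x * u x + f x))
        - -(Real.exp (-B x) * f x)) x := by
    intro x hx
    exact (((((hB x hx).neg).exp).mul ((my_deriv_int_left hg ht₀ hx).const_add (u t₀))).sub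
      (my_deriv_int_left hEf ht₀ hx))
  have hmono : MonotoneOn W (Icc S t₀) := by
    apply monotoneOn_of_deriv_nonneg (convex_Icc S t₀)
    · exact fun x hx => (hWd x (hsub hx)).continuousAt.continuousWithinAt
    · intro x hx
      rw [interior_Icc] at hx
      exact (hWd x (hsub (Ioo_subset_Icc_self hx))).differentiableAt.differentiableWithinAt
    · intro x hx
      rw [interior_Icc] at hx
      have hx0 : 0 < x := hsub (Ioo_subset_Icc_self hx)
      rw [(hWd x hx0).deriv]
      have h1 : u x ≤ u t₀ + V x := hineq x (Ioo_subset_Icc_self hx)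
      have h2 : 0 ≤ β x := hβ0 x hx0
      have h3 : (0:ℝ) < Real.exp (-B x) := Real.exp_pos _
      nlinarith [mul_le_mul_of_nonneg_left h1 (mul_nonneg h3.le h2)]
  intro t htI
  have hWt : W t ≤ W t₀ := hmono htI (right_mem_Icc.2 (htI.1.trans htI.2)) htI.2
  have hVt0 : V t₀ = 0 := intervalIntegral.integral_same
  have h1 : u t ≤ u t₀ + V t := hineq t htI
  have h3 : (0:ℝ) ≤ Real.exp (-B t) := (Real.exp_pos _).le
  have := mul_le_mul_of_nonneg_right h1 h3
  simp only [hW, hVt0, hB0, neg_zero, Real.exp_zero, one_mul, add_zero,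
    intervalIntegral.integral_same, sub_zero] at hWt
  nlinarith

set_option maxHeartbeats 1000000

/-- **Lemma 5.1.** A Gronwall-type estimate for the coupled system of differential
inequalities `|y'| ≤ b t^{-1-γ} y + a t^{-2} z`, `|z'| ≤ b t^{-1-γ} z + a t^{-γ} y`,
understood in integrated form. -/
theorem stmt16 (γ a b t₀ y₀ z₀ : ℝ) (hγ0 : 0 < γ) (hγ1 : γ < 1)
    (ha : 0 < a) (hb : 0 < b) (ht₀ : 0 < t₀)
    (y z : ℝ → ℝ)
    (hy0 : y t₀ = y₀) (hz0 : z t₀ = z₀)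
    (hyc : ContinuousOn y (Ioi 0)) (hzc : ContinuousOn z (Ioi 0))
    (hynn : ∀ t, 0 < t → 0 ≤ y t) (hznn : ∀ t, 0 < t → 0 ≤ z t)
    (hy : ∀ t₁ t₂, 0 < t₁ → t₁ ≤ t₂ →
      |y t₂ - y t₁| ≤ ∫ τ in t₁..t₂, (b * τ ^ (-1 - γ) * y τ + a * τ ^ (-(2:ℝ)) * z τ))
    (hz : ∀ t₁ t₂, 0 < t₁ → t₁ ≤ t₂ →
      |z t₂ - z t₁| ≤ ∫ τ in t₁..t₂, (b * τ ^ (-1 - γ) * z τ + a * τ ^ (-γ) * y τ)) :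
    ∀ t, 0 < t → 2 * a ^ 2 ≤ γ * min (t₀ ^ γ) (t ^ γ) →
      (t₀ ≤ t →
        y t * Real.exp (-(b / γ) * |t ^ (-γ) - t₀ ^ (-γ)|) ≤ 2 * (y₀ + a * z₀ / t₀) ∧
        z t * Real.exp (-(b / γ) * |t ^ (-γ) - t₀ ^ (-γ)|) ≤
          z₀ + 2 * (1 - γ)⁻¹ * a * (y₀ + a * z₀ / t₀) * t ^ (1 - γ)) ∧
      (t ≤ t₀ →
        y t * Real.exp (-(b / γ) * |t ^ (-γ) - t₀ ^ (-γ)|) ≤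
          y₀ + 2 * a * (z₀ + (1 - γ)⁻¹ * a * y₀ * t₀ ^ (1 - γ)) / t ∧
        z t * Real.exp (-(b / γ) * |t ^ (-γ) - t₀ ^ (-γ)|) ≤
          2 * (z₀ + (1 - γ)⁻¹ * a * y₀ * t₀ ^ (1 - γ))) := by
  intro t ht hcond
  have h1γ : (0:ℝ) < 1 - γ := by linarith
  have h4 : (0:ℝ) < (1 - γ)⁻¹ := inv_pos.2 h1γ
  have hy₀ : 0 ≤ y₀ := hy0 ▸ hynn t₀ ht₀
  have hz₀ : 0 ≤ z₀ := hz0 ▸ hznn t₀ ht₀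
  have hrp : ∀ r : ℝ, ContinuousOn (fun s : ℝ => s ^ r) (Ioi 0) := fun r x hx =>
    (Real.continuousAt_rpow_const x r (Or.inl (ne_of_gt hx))).continuousWithinAt
  have hβc : ContinuousOn (fun τ : ℝ => b * τ ^ (-1 - γ)) (Ioi 0) :=
    continuousOn_const.mul (hrp _)
  have hβ0 : ∀ s : ℝ, 0 < s → 0 ≤ b * s ^ (-1 - γ) := fun s hs =>
    mul_nonneg hb.le (Real.rpow_nonneg hs.le _)
  have hf1c : ContinuousOn (fun τ : ℝ => a * τ ^ (-(2:ℝ)) * z τ) (Ioi 0) :=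
    (continuousOn_const.mul (hrp _)).mul hzc
  have hf2c : ContinuousOn (fun τ : ℝ => a * τ ^ (-γ) * y τ) (Ioi 0) :=
    (continuousOn_const.mul (hrp _)).mul hyc
  constructor
  · -- forward case t₀ ≤ t
    intro htt
    have hsub : Icc t₀ t ⊆ Ioi (0:ℝ) := fun x hx => lt_of_lt_of_le ht₀ hx.1
    have hcond2 : 2 * a ^ 2 ≤ γ * t₀ ^ γ := by
      have h := min_le_left (t₀ ^ γ) (t ^ γ)
      nlinarith [hcond]
    set B : ℝ → ℝ := fun s => b / γ * (t₀ ^ (-γ) - s ^ (-γ)) with hBdef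
    have hBd : ∀ s : ℝ, 0 < s → HasDerivAt B (b * s ^ (-1 - γ)) s := by
      intro s hs
      have h := Real.hasDerivAt_rpow_const (x := s) (p := -γ) (Or.inl (ne_of_gt hs))
      have h2 := (h.const_sub (t₀ ^ (-γ))).const_mul (b / γ)
      refine h2.congr_deriv ?_
      rw [show (-1 - γ : ℝ) = -γ - 1 by ring]
      field_simp
    have hBc : ContinuousOn B (Ioi 0) := fun x hx =>
      (hBd x hx).continuousAt.continuousWithinAt
    have hBcont : ContinuousOn (fun τ => Real.exp (-B τ)) (Ioi 0) :=
      Real.continuous_exp.comp_continuousOn hBc.neg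
    have hB0 : B t₀ = 0 := by simp [hBdef]
    have hiy : ∀ s ∈ Icc t₀ t, y s ≤ y t₀ +
        ∫ τ in t₀..s, (b * τ ^ (-1 - γ) * y τ + a * τ ^ (-(2:ℝ)) * z τ) := by
      intro s hs
      linarith [hy t₀ s ht₀ hs.1, le_abs_self (y s - y t₀)]
    have hiz : ∀ s ∈ Icc t₀ t, z s ≤ z t₀ +
        ∫ τ in t₀..s, (b * τ ^ (-1 - γ) * z τ + a * τ ^ (-γ) * y τ) := by
      intro s hs
      linarith [hz t₀ s ht₀ hs.1, le_abs_self (z s - z t₀)]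
    have Hy : ∀ s ∈ Icc t₀ t, y s * Real.exp (-B s) ≤ y t₀ +
        ∫ τ in t₀..s, Real.exp (-B τ) * (a * τ ^ (-(2:ℝ)) * z τ) :=
      my_gron_fwd t₀ t ht₀ y (fun τ => a * τ ^ (-(2:ℝ)) * z τ)
        (fun τ => b * τ ^ (-1 - γ)) B hyc hf1c hβc hβ0 hBd hB0 hiy
    have Hz : ∀ s ∈ Icc t₀ t, z s * Real.exp (-B s) ≤ z t₀ +
        ∫ τ in t₀..s, Real.exp (-B τ) * (a * τ ^ (-γ) * y τ) :=
      my_gron_fwd t₀ t ht₀ z (fun τ => a * τ ^ (-γ) * y τ)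
        (fun τ => b * τ ^ (-1 - γ)) B hzc hf2c hβc hβ0 hBd hB0 hiz
    have hYbC : ContinuousOn (fun s => y s * Real.exp (-B s)) (Icc t₀ t) :=
      (hyc.mul hBcont).mono hsub
    obtain ⟨p, hpI, hpmax⟩ := isCompact_Icc.exists_isMaxOn (nonempty_Icc.2 htt) hYbC
    set K := y p * Real.exp (-B p) with hKdef
    have hp0 : 0 < p := hsub hpI
    have hp1 : (0:ℝ) < p⁻¹ := inv_pos.2 hp0
    have hK0 : 0 ≤ K := mul_nonneg (hynn p hp0) (Real.exp_pos _).le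
    have hKb : ∀ s ∈ Icc t₀ t, y s * Real.exp (-B s) ≤ K := fun s hs => hpmax hs
    have HZ : ∀ s ∈ Icc t₀ t, z s * Real.exp (-B s)
        ≤ z₀ + a * K * ((s ^ (1 - γ) - t₀ ^ (1 - γ)) / (1 - γ)) := by
      intro s hs
      have hs0 : 0 < s := hsub hs
      have hmono : ∫ τ in t₀..s, Real.exp (-B τ) * (a * τ ^ (-γ) * y τ)
          ≤ ∫ τ in t₀..s, a * K * τ ^ (-γ) := by
        apply intervalIntegral.integral_mono_on hs.1
          (my_cont_int (hBcont.mul hf2c) ht₀ hs0)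
          (my_cont_int (continuousOn_const.mul (hrp _)) ht₀ hs0)
        intro τ hτ
        have hτ0 : 0 < τ := lt_of_lt_of_le ht₀ hτ.1
        have h1 := hKb τ ⟨hτ.1, hτ.2.trans hs.2⟩
        have h2 : (0:ℝ) ≤ a * τ ^ (-γ) := mul_nonneg ha.le (Real.rpow_nonneg hτ0.le _)
        calc Real.exp (-B τ) * (a * τ ^ (-γ) * y τ)
            = (a * τ ^ (-γ)) * (y τ * Real.exp (-B τ)) := by ring
          _ ≤ (a * τ ^ (-γ)) * K := mul_le_mul_of_nonneg_left h1 h2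
          _ = a * K * τ ^ (-γ) := by ring
      have hcalc : ∫ τ in t₀..s, a * K * τ ^ (-γ)
          = a * K * ((s ^ (1 - γ) - t₀ ^ (1 - γ)) / (1 - γ)) := by
        rw [intervalIntegral.integral_const_mul,
          integral_rpow (Or.inl (by linarith : (-1:ℝ) < -γ)),
          show (-γ + 1 : ℝ) = 1 - γ by ring]
      have h := Hz s hs
      rw [hz0] at h
      linarith
    have hKle : K ≤ (y₀ + a * z₀ / t₀) + K / 2 := by
      have hYp := Hy p hpI
      rw [hy0] at hYp
      have hmono : ∫ τ in t₀..p, Real.exp (-B τ) * (a * τ ^ (-(2:ℝ)) * z τ)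
          ≤ ∫ τ in t₀..p, (a * z₀ * τ ^ (-(2:ℝ))
              + a ^ 2 * K * (1 - γ)⁻¹ * (τ ^ (-1 - γ) - t₀ ^ (1 - γ) * τ ^ (-(2:ℝ)))) := by
        apply intervalIntegral.integral_mono_on hpI.1
          (my_cont_int (hBcont.mul hf1c) ht₀ hp0)
          (my_cont_int ((continuousOn_const.mul (hrp _)).add
            (continuousOn_const.mul ((hrp _).sub (continuousOn_const.mul (hrp _))))) ht₀ hp0)
        intro τ hτ
        have hτ0 : 0 < τ := lt_of_lt_of_le ht₀ hτ.1
        have h2 : (0:ℝ) ≤ a * τ ^ (-(2:ℝ)) := mul_nonneg ha.le (Real.rpow_nonneg hτ0.le _)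
        have h1 := HZ τ ⟨hτ.1, hτ.2.trans hpI.2⟩
        have e3 : τ ^ (-(2:ℝ)) * τ ^ (1 - γ) = τ ^ (-1 - γ) := by
          rw [← Real.rpow_add hτ0]; congr 1; ring
        calc Real.exp (-B τ) * (a * τ ^ (-(2:ℝ)) * z τ)
            = (a * τ ^ (-(2:ℝ))) * (z τ * Real.exp (-B τ)) := by ring
          _ ≤ (a * τ ^ (-(2:ℝ))) * (z₀ + a * K * ((τ ^ (1 - γ) - t₀ ^ (1 - γ)) / (1 - γ))) :=
              mul_le_mul_of_nonneg_left h1 h2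
          _ = a * z₀ * τ ^ (-(2:ℝ))
              + a ^ 2 * K * (1 - γ)⁻¹
                * (τ ^ (-(2:ℝ)) * τ ^ (1 - γ) - t₀ ^ (1 - γ) * τ ^ (-(2:ℝ))) := by
              rw [div_eq_mul_inv]; ring
          _ = a * z₀ * τ ^ (-(2:ℝ))
              + a ^ 2 * K * (1 - γ)⁻¹ * (τ ^ (-1 - γ) - t₀ ^ (1 - γ) * τ ^ (-(2:ℝ))) := by
              rw [e3]
      have hIA : ∫ τ in t₀..p, (a * z₀ * τ ^ (-(2:ℝ))
              + a ^ 2 * K * (1 - γ)⁻¹ * (τ ^ (-1 - γ) - t₀ ^ (1 - γ) * τ ^ (-(2:ℝ))))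
          = a * z₀ * ((p⁻¹ - t₀⁻¹) / (-1))
            + a ^ 2 * K * (1 - γ)⁻¹ * ((p ^ (-γ) - t₀ ^ (-γ)) / (-γ)
              - t₀ ^ (1 - γ) * ((p⁻¹ - t₀⁻¹) / (-1))) := by
        rw [intervalIntegral.integral_add (f := fun τ => a * z₀ * τ ^ (-(2:ℝ)))
            (g := fun τ => a ^ 2 * K * (1 - γ)⁻¹ * (τ ^ (-1 - γ) - t₀ ^ (1 - γ) * τ ^ (-(2:ℝ))))
            (my_cont_int (continuousOn_const.mul (hrp _)) ht₀ hp0)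
            (my_cont_int (continuousOn_const.mul
              ((hrp _).sub (continuousOn_const.mul (hrp _)))) ht₀ hp0),
          intervalIntegral.integral_const_mul, intervalIntegral.integral_const_mul,
          intervalIntegral.integral_sub (f := fun τ => τ ^ (-1 - γ))
            (g := fun τ => t₀ ^ (1 - γ) * τ ^ (-(2:ℝ))) (my_cont_int (hrp _) ht₀ hp0)
            (my_cont_int (continuousOn_const.mul (hrp _)) ht₀ hp0),
          intervalIntegral.integral_const_mul,
          integral_rpow (Or.inr ⟨by norm_num, Set.notMem_uIcc_of_lt ht₀ hp0⟩),
          integral_rpow (Or.inr ⟨by intro hc; rw [show (-1-γ : ℝ) = -1 ↔ γ = 0 by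
            constructor <;> intro h <;> linarith] at hc; exact hγ0.ne' hc,
            Set.notMem_uIcc_of_lt ht₀ hp0⟩)]
        norm_num
        rw [show (-1 - γ + 1 : ℝ) = -γ by ring, Real.rpow_neg_one, Real.rpow_neg_one]
      have hcomb := hmono.trans_eq hIA
      -- arithmetic phase
      have e4 : t₀ ^ (1 - γ) * t₀⁻¹ = t₀ ^ (-γ) := by
        rw [← Real.rpow_neg_one t₀, ← Real.rpow_add ht₀]; congr 1; ring
      have e5 : γ * (t₀ ^ (1 - γ) * p⁻¹) ≤ p ^ (-γ) := by
        have h1 : t₀ ^ (1 - γ) ≤ p ^ (1 - γ) := Real.rpow_le_rpow ht₀.le hpI.1 h1γ.le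
        have h2 : p ^ (1 - γ) * p⁻¹ = p ^ (-γ) := by
          rw [← Real.rpow_neg_one p, ← Real.rpow_add hp0]; congr 1; ring
        calc γ * (t₀ ^ (1 - γ) * p⁻¹) ≤ 1 * (p ^ (1 - γ) * p⁻¹) :=
              mul_le_mul hγ1.le (mul_le_mul_of_nonneg_right h1 hp1.le)
                (mul_nonneg (Real.rpow_nonneg ht₀.le _) hp1.le) zero_le_one
          _ = p ^ (-γ) := by rw [one_mul, h2]
      have key : (1 - γ)⁻¹ * ((p ^ (-γ) - t₀ ^ (-γ)) / (-γ)
          - t₀ ^ (1 - γ) * ((p⁻¹ - t₀⁻¹) / (-1))) ≤ γ⁻¹ * t₀ ^ (-γ) := by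
        have e6 : t₀ ^ (1 - γ) * p⁻¹ ≤ γ⁻¹ * p ^ (-γ) := (le_inv_mul_iff₀ hγ0).2 e5
        have e7 : (p ^ (-γ) - t₀ ^ (-γ)) / (-γ) = γ⁻¹ * t₀ ^ (-γ) - γ⁻¹ * p ^ (-γ) := by
          rw [div_neg, div_eq_mul_inv]; ring
        have e9 : (1 - γ) * (γ⁻¹ * t₀ ^ (-γ)) = γ⁻¹ * t₀ ^ (-γ) - t₀ ^ (-γ) := by
          field_simp
        rw [e7, inv_mul_le_iff₀ h1γ, div_neg, div_one, e9]
        nlinarith [e6, e4]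
      have hhalf : a ^ 2 * (γ⁻¹ * t₀ ^ (-γ)) ≤ 1 / 2 := by
        have hpos : (0:ℝ) < γ * t₀ ^ γ := mul_pos hγ0 (Real.rpow_pos_of_pos ht₀ γ)
        rw [Real.rpow_neg ht₀.le,
          show a ^ 2 * (γ⁻¹ * (t₀ ^ γ)⁻¹) = a ^ 2 / (γ * t₀ ^ γ) by
            rw [div_eq_mul_inv, mul_inv],
          div_le_iff₀ hpos]
        linarith
      have s1 : a ^ 2 * K * ((1 - γ)⁻¹ * ((p ^ (-γ) - t₀ ^ (-γ)) / (-γ)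
            - t₀ ^ (1 - γ) * ((p⁻¹ - t₀⁻¹) / (-1))))
          ≤ a ^ 2 * K * (γ⁻¹ * t₀ ^ (-γ)) :=
        mul_le_mul_of_nonneg_left key (by positivity)
      have s2 : K * (a ^ 2 * (γ⁻¹ * t₀ ^ (-γ))) ≤ K * (1 / 2) :=
        mul_le_mul_of_nonneg_left hhalf hK0
      have s3 : a * z₀ * ((p⁻¹ - t₀⁻¹) / (-1)) ≤ a * z₀ / t₀ := by
        rw [div_neg, div_one, div_eq_mul_inv]
        nlinarith [mul_nonneg (mul_nonneg ha.le hz₀) hp1.le]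
      have s4 : a ^ 2 * K * (γ⁻¹ * t₀ ^ (-γ)) ≤ K / 2 := by linarith [s2]
      linarith [hYp, hcomb, s1, s4, s3]
    have hC0 : (0:ℝ) ≤ y₀ + a * z₀ / t₀ :=
      add_nonneg hy₀ (div_nonneg (mul_nonneg ha.le hz₀) ht₀.le)
    have hK2C : K ≤ 2 * (y₀ + a * z₀ / t₀) := by linarith
    have habs : |t ^ (-γ) - t₀ ^ (-γ)| = t₀ ^ (-γ) - t ^ (-γ) := by
      have h : t ^ (-γ) ≤ t₀ ^ (-γ) := by
        rw [Real.rpow_neg ht.le, Real.rpow_neg ht₀.le]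
        exact inv_anti₀ (Real.rpow_pos_of_pos ht₀ γ)
          (Real.rpow_le_rpow ht₀.le htt hγ0.le)
      rw [abs_of_nonpos (by linarith)]; ring
    have hEeq : Real.exp (-(b / γ) * |t ^ (-γ) - t₀ ^ (-γ)|) = Real.exp (-B t) := by
      rw [habs]; congr 1; simp only [hBdef]; ring
    constructor
    · rw [hEeq]
      exact (hKb t ⟨htt, le_rfl⟩).trans hK2C
    · rw [hEeq]
      have hHZt := HZ t ⟨htt, le_rfl⟩
      have hΔ1 : 0 ≤ t ^ (1 - γ) - t₀ ^ (1 - γ) :=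
        sub_nonneg.2 (Real.rpow_le_rpow ht₀.le htt h1γ.le)
      have hΔ2 : t ^ (1 - γ) - t₀ ^ (1 - γ) ≤ t ^ (1 - γ) := by
        nlinarith [Real.rpow_nonneg ht₀.le (1 - γ)]
      have s1 : K * (t ^ (1 - γ) - t₀ ^ (1 - γ))
          ≤ (2 * (y₀ + a * z₀ / t₀)) * t ^ (1 - γ) :=
        mul_le_mul hK2C hΔ2 hΔ1 (by linarith)
      rw [div_eq_mul_inv] at hHZt
      nlinarith [mul_le_mul_of_nonneg_left s1 (mul_nonneg ha.le h4.le)]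
  · -- backward case t ≤ t₀
    intro htt
    have hsub : Icc t t₀ ⊆ Ioi (0:ℝ) := fun x hx => lt_of_lt_of_le ht hx.1
    have hcond2 : 2 * a ^ 2 ≤ γ * t ^ γ := by
      have h := min_le_right (t₀ ^ γ) (t ^ γ)
      nlinarith [hcond]
    set B : ℝ → ℝ := fun s => b / γ * (s ^ (-γ) - t₀ ^ (-γ)) with hBdef
    have hBd : ∀ s : ℝ, 0 < s → HasDerivAt B (-(b * s ^ (-1 - γ))) s := by
      intro s hs
      have h := Real.hasDerivAt_rpow_const (x := s) (p := -γ) (Or.inl (ne_of_gt hs))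
      have h2 := (h.sub_const (t₀ ^ (-γ))).const_mul (b / γ)
      refine h2.congr_deriv ?_
      rw [show (-1 - γ : ℝ) = -γ - 1 by ring]
      field_simp
    have hBc : ContinuousOn B (Ioi 0) := fun x hx =>
      (hBd x hx).continuousAt.continuousWithinAt
    have hBcont : ContinuousOn (fun τ => Real.exp (-B τ)) (Ioi 0) :=
      Real.continuous_exp.comp_continuousOn hBc.neg
    have hB0 : B t₀ = 0 := by simp [hBdef]
    have hiy : ∀ s ∈ Icc t t₀, y s ≤ y t₀ +
        ∫ τ in s..t₀, (b * τ ^ (-1 - γ) * y τ + a * τ ^ (-(2:ℝ)) * z τ) := by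
      intro s hs
      have h := hy s t₀ (hsub hs) hs.2
      rw [abs_sub_comm] at h
      linarith [le_abs_self (y s - y t₀)]
    have hiz : ∀ s ∈ Icc t t₀, z s ≤ z t₀ +
        ∫ τ in s..t₀, (b * τ ^ (-1 - γ) * z τ + a * τ ^ (-γ) * y τ) := by
      intro s hs
      have h := hz s t₀ (hsub hs) hs.2
      rw [abs_sub_comm] at h
      linarith [le_abs_self (z s - z t₀)]
    have Hy : ∀ s ∈ Icc t t₀, y s * Real.exp (-B s) ≤ y t₀ +
        ∫ τ in s..t₀, Real.exp (-B τ) * (a * τ ^ (-(2:ℝ)) * z τ) :=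
      my_gron_bwd t₀ t ht y (fun τ => a * τ ^ (-(2:ℝ)) * z τ)
        (fun τ => b * τ ^ (-1 - γ)) B hyc hf1c hβc hβ0 hBd hB0 hiy
    have Hz : ∀ s ∈ Icc t t₀, z s * Real.exp (-B s) ≤ z t₀ +
        ∫ τ in s..t₀, Real.exp (-B τ) * (a * τ ^ (-γ) * y τ) :=
      my_gron_bwd t₀ t ht z (fun τ => a * τ ^ (-γ) * y τ)
        (fun τ => b * τ ^ (-1 - γ)) B hzc hf2c hβc hβ0 hBd hB0 hiz
    have hZbC : ContinuousOn (fun s => z s * Real.exp (-B s)) (Icc t t₀) :=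
      (hzc.mul hBcont).mono hsub
    obtain ⟨p, hpI, hpmax⟩ := isCompact_Icc.exists_isMaxOn (nonempty_Icc.2 htt) hZbC
    set K := z p * Real.exp (-B p) with hKdef
    have hp0 : 0 < p := hsub hpI
    have hp1 : (0:ℝ) < p⁻¹ := inv_pos.2 hp0
    have ht1 : (0:ℝ) < t⁻¹ := inv_pos.2 ht
    have ht₀1 : (0:ℝ) < t₀⁻¹ := inv_pos.2 ht₀
    have hK0 : 0 ≤ K := mul_nonneg (hznn p hp0) (Real.exp_pos _).le
    have hKb : ∀ s ∈ Icc t t₀, z s * Real.exp (-B s) ≤ K := fun s hs => hpmax hs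
    have HY : ∀ s ∈ Icc t t₀, y s * Real.exp (-B s)
        ≤ y₀ + a * K * (s⁻¹ - t₀⁻¹) := by
      intro s hs
      have hs0 : 0 < s := hsub hs
      have hmono : ∫ τ in s..t₀, Real.exp (-B τ) * (a * τ ^ (-(2:ℝ)) * z τ)
          ≤ ∫ τ in s..t₀, a * K * τ ^ (-(2:ℝ)) := by
        apply intervalIntegral.integral_mono_on hs.2
          (my_cont_int (hBcont.mul hf1c) hs0 ht₀)
          (my_cont_int (continuousOn_const.mul (hrp _)) hs0 ht₀)
        intro τ hτ
        have hτ0 : 0 < τ := lt_of_lt_of_le hs0 hτ.1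
        have h1 := hKb τ ⟨hs.1.trans hτ.1, hτ.2⟩
        have h2 : (0:ℝ) ≤ a * τ ^ (-(2:ℝ)) := mul_nonneg ha.le (Real.rpow_nonneg hτ0.le _)
        calc Real.exp (-B τ) * (a * τ ^ (-(2:ℝ)) * z τ)
            = (a * τ ^ (-(2:ℝ))) * (z τ * Real.exp (-B τ)) := by ring
          _ ≤ (a * τ ^ (-(2:ℝ))) * K := mul_le_mul_of_nonneg_left h1 h2
          _ = a * K * τ ^ (-(2:ℝ)) := by ring
      have hcalc : ∫ τ in s..t₀, a * K * τ ^ (-(2:ℝ)) = a * K * (s⁻¹ - t₀⁻¹) := by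
        rw [intervalIntegral.integral_const_mul,
          integral_rpow (Or.inr ⟨by norm_num, Set.notMem_uIcc_of_lt hs0 ht₀⟩),
          show (-(2:ℝ) + 1) = (-1:ℝ) by norm_num, Real.rpow_neg_one, Real.rpow_neg_one]
        ring
      have h := Hy s hs
      rw [hy0] at h
      linarith
    have hC0 : (0:ℝ) ≤ z₀ + (1 - γ)⁻¹ * a * y₀ * t₀ ^ (1 - γ) :=
      add_nonneg hz₀ (mul_nonneg (mul_nonneg (mul_nonneg h4.le ha.le) hy₀)
        (Real.rpow_nonneg ht₀.le _))
    have hKle : K ≤ (z₀ + (1 - γ)⁻¹ * a * y₀ * t₀ ^ (1 - γ)) + K / 2 := by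
      have hZp := Hz p hpI
      rw [hz0] at hZp
      have hmono : ∫ τ in p..t₀, Real.exp (-B τ) * (a * τ ^ (-γ) * y τ)
          ≤ ∫ τ in p..t₀, (a * y₀ * τ ^ (-γ)
              + a ^ 2 * K * (τ ^ (-1 - γ) - t₀⁻¹ * τ ^ (-γ))) := by
        apply intervalIntegral.integral_mono_on hpI.2
          (my_cont_int (hBcont.mul hf2c) hp0 ht₀)
          (my_cont_int ((continuousOn_const.mul (hrp _)).add
            (continuousOn_const.mul ((hrp _).sub (continuousOn_const.mul (hrp _))))) hp0 ht₀)
        intro τ hτ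
        have hτ0 : 0 < τ := lt_of_lt_of_le hp0 hτ.1
        have h2 : (0:ℝ) ≤ a * τ ^ (-γ) := mul_nonneg ha.le (Real.rpow_nonneg hτ0.le _)
        have h1 := HY τ ⟨hpI.1.trans hτ.1, hτ.2⟩
        have e3 : τ ^ (-γ) * τ⁻¹ = τ ^ (-1 - γ) := by
          rw [← Real.rpow_neg_one τ, ← Real.rpow_add hτ0]; congr 1; ring
        calc Real.exp (-B τ) * (a * τ ^ (-γ) * y τ)
            = (a * τ ^ (-γ)) * (y τ * Real.exp (-B τ)) := by ring
          _ ≤ (a * τ ^ (-γ)) * (y₀ + a * K * (τ⁻¹ - t₀⁻¹)) :=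
              mul_le_mul_of_nonneg_left h1 h2
          _ = a * y₀ * τ ^ (-γ)
              + a ^ 2 * K * (τ ^ (-γ) * τ⁻¹ - t₀⁻¹ * τ ^ (-γ)) := by ring
          _ = a * y₀ * τ ^ (-γ)
              + a ^ 2 * K * (τ ^ (-1 - γ) - t₀⁻¹ * τ ^ (-γ)) := by rw [e3]
      have hIA : ∫ τ in p..t₀, (a * y₀ * τ ^ (-γ)
              + a ^ 2 * K * (τ ^ (-1 - γ) - t₀⁻¹ * τ ^ (-γ)))
          = a * y₀ * ((t₀ ^ (1 - γ) - p ^ (1 - γ)) / (1 - γ))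
            + a ^ 2 * K * ((t₀ ^ (-γ) - p ^ (-γ)) / (-γ)
              - t₀⁻¹ * ((t₀ ^ (1 - γ) - p ^ (1 - γ)) / (1 - γ))) := by
        rw [intervalIntegral.integral_add (f := fun τ => a * y₀ * τ ^ (-γ))
            (g := fun τ => a ^ 2 * K * (τ ^ (-1 - γ) - t₀⁻¹ * τ ^ (-γ)))
            (my_cont_int (continuousOn_const.mul (hrp _)) hp0 ht₀)
            (my_cont_int (continuousOn_const.mul
              ((hrp _).sub (continuousOn_const.mul (hrp _)))) hp0 ht₀),
          intervalIntegral.integral_const_mul, intervalIntegral.integral_const_mul,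
          intervalIntegral.integral_sub (f := fun τ => τ ^ (-1 - γ))
            (g := fun τ => t₀⁻¹ * τ ^ (-γ)) (my_cont_int (hrp _) hp0 ht₀)
            (my_cont_int (continuousOn_const.mul (hrp _)) hp0 ht₀),
          intervalIntegral.integral_const_mul,
          integral_rpow (Or.inl (by linarith : (-1:ℝ) < -γ)),
          integral_rpow (Or.inr ⟨by intro hc; rw [show (-1-γ : ℝ) = -1 ↔ γ = 0 by
            constructor <;> intro h <;> linarith] at hc; exact hγ0.ne' hc,
            Set.notMem_uIcc_of_lt hp0 ht₀⟩)]
        rw [show (-γ + 1 : ℝ) = 1 - γ by ring, show (-1 - γ + 1 : ℝ) = -γ by ring]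
      have hcomb := hmono.trans_eq hIA
      -- bounds
      have hpt : p ^ (-γ) ≤ t ^ (-γ) := by
        rw [Real.rpow_neg ht.le, Real.rpow_neg hp0.le]
        exact inv_anti₀ (Real.rpow_pos_of_pos ht γ)
          (Real.rpow_le_rpow ht.le hpI.1 hγ0.le)
      have hq1 : (t₀ ^ (-γ) - p ^ (-γ)) / (-γ) ≤ γ⁻¹ * t ^ (-γ) := by
        rw [div_neg, div_eq_mul_inv]
        have h1 : 0 ≤ t₀ ^ (-γ) := Real.rpow_nonneg ht₀.le _
        nlinarith [inv_pos.2 hγ0, mul_le_mul_of_nonneg_right hpt (inv_pos.2 hγ0).le]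
      have hq2 : 0 ≤ t₀⁻¹ * ((t₀ ^ (1 - γ) - p ^ (1 - γ)) / (1 - γ)) := by
        have h1 : p ^ (1 - γ) ≤ t₀ ^ (1 - γ) := Real.rpow_le_rpow hp0.le hpI.2 h1γ.le
        have := div_nonneg (sub_nonneg.2 h1) h1γ.le
        positivity
      have hq3 : a * y₀ * ((t₀ ^ (1 - γ) - p ^ (1 - γ)) / (1 - γ))
          ≤ (1 - γ)⁻¹ * a * y₀ * t₀ ^ (1 - γ) := by
        rw [div_eq_mul_inv]
        have h1 : 0 ≤ p ^ (1 - γ) := Real.rpow_nonneg hp0.le _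
        have h2 : t₀ ^ (1 - γ) - p ^ (1 - γ) ≤ t₀ ^ (1 - γ) := by linarith
        have h3 : 0 ≤ a * y₀ := mul_nonneg ha.le hy₀
        nlinarith [mul_le_mul_of_nonneg_left (mul_le_mul_of_nonneg_right h2 h4.le) h3]
      have hhalf : a ^ 2 * (γ⁻¹ * t ^ (-γ)) ≤ 1 / 2 := by
        have hpos : (0:ℝ) < γ * t ^ γ := mul_pos hγ0 (Real.rpow_pos_of_pos ht γ)
        rw [Real.rpow_neg ht.le,
          show a ^ 2 * (γ⁻¹ * (t ^ γ)⁻¹) = a ^ 2 / (γ * t ^ γ) by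
            rw [div_eq_mul_inv, mul_inv],
          div_le_iff₀ hpos]
        linarith
      have s1 : a ^ 2 * K * ((t₀ ^ (-γ) - p ^ (-γ)) / (-γ)
            - t₀⁻¹ * ((t₀ ^ (1 - γ) - p ^ (1 - γ)) / (1 - γ)))
          ≤ a ^ 2 * K * (γ⁻¹ * t ^ (-γ)) :=
        mul_le_mul_of_nonneg_left (by linarith) (by positivity)
      have s2 : K * (a ^ 2 * (γ⁻¹ * t ^ (-γ))) ≤ K * (1 / 2) :=
        mul_le_mul_of_nonneg_left hhalf hK0
      have s4 : a ^ 2 * K * (γ⁻¹ * t ^ (-γ)) ≤ K / 2 := by linarith [s2]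
      linarith [hZp, hcomb, s1, s4, hq3]
    have hK2C : K ≤ 2 * (z₀ + (1 - γ)⁻¹ * a * y₀ * t₀ ^ (1 - γ)) := by linarith
    have habs : |t ^ (-γ) - t₀ ^ (-γ)| = t ^ (-γ) - t₀ ^ (-γ) := by
      have h : t₀ ^ (-γ) ≤ t ^ (-γ) := by
        rw [Real.rpow_neg ht.le, Real.rpow_neg ht₀.le]
        exact inv_anti₀ (Real.rpow_pos_of_pos ht γ)
          (Real.rpow_le_rpow ht.le htt hγ0.le)
      rw [abs_of_nonneg (by linarith)]
    have hEeq : Real.exp (-(b / γ) * |t ^ (-γ) - t₀ ^ (-γ)|) = Real.exp (-B t) := by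
      rw [habs]; congr 1; simp only [hBdef]; ring
    constructor
    · rw [hEeq]
      have hHYt := HY t ⟨le_rfl, htt⟩
      have hΔ1 : 0 ≤ t⁻¹ - t₀⁻¹ := sub_nonneg.2 (inv_anti₀ ht htt)
      have hΔ2 : t⁻¹ - t₀⁻¹ ≤ t⁻¹ := by linarith
      have s1 : K * (t⁻¹ - t₀⁻¹) ≤ (2 * (z₀ + (1 - γ)⁻¹ * a * y₀ * t₀ ^ (1 - γ))) * t⁻¹ :=
        mul_le_mul hK2C hΔ2 hΔ1 (by linarith)
      have e1 : y₀ + 2 * a * (z₀ + (1 - γ)⁻¹ * a * y₀ * t₀ ^ (1 - γ)) / t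
          = y₀ + a * ((2 * (z₀ + (1 - γ)⁻¹ * a * y₀ * t₀ ^ (1 - γ))) * t⁻¹) := by
        rw [div_eq_mul_inv]; ring
      rw [e1]
      nlinarith [mul_le_mul_of_nonneg_left s1 ha.le]
    · rw [hEeq]
      exact (hKb t ⟨le_rfl, htt⟩).trans hK2C
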